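/- Let P be a finite trivial poset with width w(P) ≥ 2. Then for every n ≥ 1 the poset Ramsey number satisfies n + h(P) + 1 ≤ R(P, Q_n) < n + h(P) + log₂ w(P) + (1/2)·log₂ log₂ w(P) + 1, where h(P) is the height of P. -/

import Mathlib

/-!
Lower bound: on `N ≤ n + h(P)` points, colour a set blue if it has fewer than `h(P)` elements or
is everything. A blue copy of `P` would send an element of a longest chain either to the full set
or, the chain filling the `h(P)` small levels, to `∅`; either way that element becomes comparable
to an element of another comparability class. A red copy of `Q_n` would need `n + 1` levels in
`[h(P), N)`.

Upper bound: take blocks of sizes `n`, `h(P) - 1` and `c`, with `w(P) ≤ C(c, ⌊c/2⌋)`, so that the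
comparability classes (which are chains) get distinct middle-layer subsets of the last block. Over
each such subset sits a copy of `Q_n × [h(P)]`; either one of them has a red section
`X ↦ (X, s X)`, a red copy of `Q_n`, or all of them carry a blue chain through every level, and
each class of `P` is placed on its own chain. For the least such `c`, the bound
`4^c ≤ C(c, ⌊c/2⌋)² (2c + 2)` applied to `c - 1` gives `c < log w + ½ log log w + 2`.
-/

/-- The poset Ramsey number `R(P₁, P₂)`: the least `N` such that every blue/red coloring
(`true` = blue, `false` = red) of the Boolean lattice `Q_N` (all subsets of an `N`-element
set, ordered by inclusion) contains a blue (induced) copy of `P₁` or a red (induced) copy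
of `P₂`. -/
noncomputable def posetRamsey (P₁ : Type*) (P₂ : Type*) [PartialOrder P₁] [PartialOrder P₂] : ℕ :=
  sInf {N : ℕ | ∀ c : Finset (Fin N) → Bool,
    (∃ f : P₁ ↪o Finset (Fin N), ∀ x, c (f x) = true) ∨
    (∃ f : P₂ ↪o Finset (Fin N), ∀ x, c (f x) = false)}

/-- The height of a poset: the maximum size of a chain. -/
noncomputable def posetHeight (P : Type*) [PartialOrder P] : ℕ :=
  sSup {m : ℕ | ∃ s : Finset P, IsChain (· ≤ ·) (s : Set P) ∧ s.card = m}

/-- The width of a poset: the maximum size of an antichain. -/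
noncomputable def posetWidth (P : Type*) [PartialOrder P] : ℕ :=
  sSup {m : ℕ | ∃ s : Finset P, IsAntichain (· ≤ ·) (s : Set P) ∧ s.card = m}

/-- A poset is trivial if it contains no copy of `V` (two incomparable elements above
a common element) and no copy of `Λ` (two incomparable elements below a common element). -/
def IsTrivialPoset (P : Type*) [PartialOrder P] : Prop :=
  (¬ ∃ a b c : P, c ≤ a ∧ c ≤ b ∧ ¬ a ≤ b ∧ ¬ b ≤ a) ∧
  (¬ ∃ a b c : P, a ≤ c ∧ b ≤ c ∧ ¬ a ≤ b ∧ ¬ b ≤ a)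

open Finset Relation

namespace Nat

theorem sixteen_pow_le_centralBinom_sq_mul {m : ℕ} (hm : 0 < m) :
    16 ^ m ≤ m.centralBinom ^ 2 * (4 * m) := by
  induction m, hm using Nat.le_induction with
  | base => decide
  | succ m _ ih =>
    refine Nat.le_of_mul_le_mul_right ?_ (by positivity : 0 < (m + 1) ^ 2)
    calc 16 ^ (m + 1) * (m + 1) ^ 2 = 16 * (m + 1) ^ 2 * 16 ^ m := by ring
      _ ≤ 16 * (m + 1) ^ 2 * (m.centralBinom ^ 2 * (4 * m)) := by gcongr
      _ = 16 * (m + 1) * m.centralBinom ^ 2 * (4 * m * (m + 1)) := by ring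
      _ ≤ 16 * (m + 1) * m.centralBinom ^ 2 * (2 * m + 1) ^ 2 := by gcongr; nlinarith
      _ = (2 * (2 * m + 1) * m.centralBinom) ^ 2 * (4 * (m + 1)) := by ring
      _ = (m + 1).centralBinom ^ 2 * (4 * (m + 1)) * (m + 1) ^ 2 := by
        rw [← succ_mul_centralBinom_succ]; ring

theorem centralBinom_succ_eq_two_mul_choose (m : ℕ) :
    (m + 1).centralBinom = 2 * (2 * m + 1).choose m := by
  rw [centralBinom_eq_two_mul_choose, show 2 * (m + 1) = 2 * m + 1 + 1 by ring,
    choose_succ_succ, choose_symm_half]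
  ring

theorem four_pow_le_choose_half_sq_mul (c : ℕ) :
    4 ^ c ≤ c.choose (c / 2) ^ 2 * (2 * c + 2) := by
  obtain ⟨m, rfl | rfl⟩ := c.even_or_odd'
  · rw [show 2 * m / 2 = m by omega, ← centralBinom_eq_two_mul_choose, pow_mul]
    rcases m.eq_zero_or_pos with rfl | hm
    · decide
    · calc (4 ^ 2) ^ m ≤ m.centralBinom ^ 2 * (4 * m) := sixteen_pow_le_centralBinom_sq_mul hm
        _ ≤ _ := by gcongr; omega
  · rw [show (2 * m + 1) / 2 = m by omega]
    refine Nat.le_of_mul_le_mul_left ?_ (by norm_num : 0 < 4)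
    calc 4 * 4 ^ (2 * m + 1) = 16 ^ (m + 1) := by
          rw [show (16 : ℕ) = 4 ^ 2 by rfl, ← pow_mul]; ring
      _ ≤ (m + 1).centralBinom ^ 2 * (4 * (m + 1)) :=
        sixteen_pow_le_centralBinom_sq_mul m.succ_pos
      _ = _ := by rw [centralBinom_succ_eq_two_mul_choose]; ring

theorem two_pow_succ_le_choose_half_add_one_sq (k : ℕ) :
    2 ^ (k + 1) ≤ (k.choose (k / 2) + 1) ^ 2 := by
  rcases lt_or_ge k 5 with hk | hk
  · interval_cases k <;> decide
  · have h4k : 4 * k + 4 ≤ 2 ^ k := by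
      induction k, hk using Nat.le_induction with
      | base => decide
      | succ k _ ih => rw [pow_succ]; omega
    refine Nat.le_of_mul_le_mul_right ?_ (by omega : 0 < 2 * k + 2)
    calc 2 ^ (k + 1) * (2 * k + 2) ≤ 2 ^ k * 2 ^ k := by rw [pow_succ]; nlinarith
      _ = 4 ^ k := by rw [← mul_pow]; rfl
      _ ≤ k.choose (k / 2) ^ 2 * (2 * k + 2) := four_pow_le_choose_half_sq_mul k
      _ ≤ _ := by gcongr; omega

end Nat

section Logb

open Real

theorem add_one_lt_logb_add_half_logb_logb {w : ℝ} {k : ℕ} (hw : 1 < w)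
    (h₁ : (2 : ℝ) ^ (k + 1) ≤ w ^ 2) (h₂ : (4 : ℝ) ^ k < w ^ 2 * (2 * k + 2)) :
    (k : ℝ) + 1 < logb 2 w + 1 / 2 * logb 2 (logb 2 w) + 2 := by
  have hL : 0 < logb 2 w := logb_pos one_lt_two hw
  have hlog_two_pow (j : ℕ) : logb 2 ((2 : ℝ) ^ j) = j := by
    rw [logb_pow, logb_self_eq_one one_lt_two, mul_one]
  have hkL : (k : ℝ) + 1 ≤ 2 * logb 2 w := by
    have := logb_le_logb_of_le one_lt_two (by positivity) h₁
    rwa [hlog_two_pow, logb_pow, Nat.cast_ofNat, Nat.cast_succ] at this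
  have h₃ : (2 : ℝ) ^ (2 * k) < w ^ 2 * (2 ^ 2 * logb 2 w) :=
    calc (2 : ℝ) ^ (2 * k) = 4 ^ k := by rw [pow_mul]; norm_num
      _ < w ^ 2 * (2 * k + 2) := h₂
      _ ≤ w ^ 2 * (2 ^ 2 * logb 2 w) := by gcongr; linarith
  have hlog := logb_lt_logb (b := 2) one_lt_two (by positivity) h₃
  rw [hlog_two_pow, logb_mul (by positivity) (by positivity), logb_mul (by positivity) hL.ne',
    logb_pow, hlog_two_pow] at hlog
  push_cast at hlog
  linarith

theorem exists_le_choose_half_lt_logb {w : ℕ} (hw : 2 ≤ w) :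
    ∃ c : ℕ, w ≤ c.choose (c / 2) ∧
      (c : ℝ) < logb 2 w + 1 / 2 * logb 2 (logb 2 w) + 2 := by
  have hex : ∃ c : ℕ, w ≤ c.choose (c / 2) := ⟨w, by
    simpa using Nat.choose_le_middle 1 w⟩
  obtain ⟨k, hk⟩ : ∃ k, Nat.find hex = k + 1 := Nat.exists_eq_succ_of_ne_zero fun h0 => by
    have := Nat.find_spec hex
    rw [h0] at this
    simp at this
    omega
  have hB : k.choose (k / 2) < w := not_le.1 (Nat.find_min hex (by omega))
  refine ⟨k + 1, hk ▸ Nat.find_spec hex, ?_⟩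
  have h₁ : 2 ^ (k + 1) ≤ w ^ 2 :=
    (Nat.two_pow_succ_le_choose_half_add_one_sq k).trans (by gcongr; omega)
  have h₂ : 4 ^ k < w ^ 2 * (2 * k + 2) :=
    (Nat.four_pow_le_choose_half_sq_mul k).trans_lt (by gcongr)
  push_cast
  exact add_one_lt_logb_add_half_logb_logb (by exact_mod_cast hw) (by exact_mod_cast h₁)
    (by exact_mod_cast h₂)

end Logb

section Arrows

def Arrows (P Q T : Type*) [LE P] [LE Q] [LE T] : Prop :=
  ∀ c : T → Bool,
    (∃ f : P ↪o T, ∀ x, c (f x) = true) ∨ (∃ f : Q ↪o T, ∀ x, c (f x) = false)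

variable {P Q T T' : Type*} [LE P] [LE Q] [LE T] [LE T']

theorem Arrows.of_orderEmbedding (h : Arrows P Q T) (e : T ↪o T') : Arrows P Q T' := by
  intro c
  rcases h (c ∘ e) with ⟨f, hf⟩ | ⟨f, hf⟩
  · exact .inl ⟨f.trans e, hf⟩
  · exact .inr ⟨f.trans e, hf⟩

end Arrows

theorem posetRamsey_eq_sInf (P Q : Type*) [PartialOrder P] [PartialOrder Q] :
    posetRamsey P Q = sInf {N | Arrows P Q (Finset (Fin N))} := rfl

section Card

variable {α : Type*} [Fintype α]

theorem bddAbove_setOf_card (p : Finset α → Prop) : BddAbove {m | ∃ s, p s ∧ #s = m} :=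
  ⟨Fintype.card α, by rintro _ ⟨s, -, rfl⟩; exact card_le_univ s⟩

theorem exists_card_eq_sSup (p : Finset α → Prop) (h₀ : p ∅) :
    ∃ s, p s ∧ #s = sSup {m | ∃ s, p s ∧ #s = m} :=
  Nat.sSup_mem (s := {m | ∃ s, p s ∧ #s = m}) ⟨0, ∅, h₀, rfl⟩ (bddAbove_setOf_card p)

end Card

section Poset

variable {P : Type*} [PartialOrder P]

namespace IsTrivialPoset

variable (h : IsTrivialPoset P) {a b c : P}
include h

theorem symmGen_of_ge_of_ge (ha : c ≤ a) (hb : c ≤ b) : SymmGen (· ≤ ·) a b := by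
  by_contra hab
  exact h.1 ⟨a, b, c, ha, hb, fun h' => hab (.inl h'), fun h' => hab (.inr h')⟩

theorem symmGen_of_le_of_le (ha : a ≤ c) (hb : b ≤ c) : SymmGen (· ≤ ·) a b := by
  by_contra hab
  exact h.2 ⟨a, b, c, ha, hb, fun h' => hab (.inl h'), fun h' => hab (.inr h')⟩

theorem symmGen_trans (hab : SymmGen (· ≤ ·) a b) (hbc : SymmGen (· ≤ ·) b c) :
    SymmGen (· ≤ ·) a c := by
  rcases hab with hab | hba <;> rcases hbc with hbc | hcb
  · exact .inl (hab.trans hbc)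
  · exact h.symmGen_of_le_of_le hab hcb
  · exact h.symmGen_of_ge_of_ge hba hbc
  · exact .inr (hcb.trans hba)

def compSetoid : Setoid P :=
  ⟨SymmGen (· ≤ ·), ⟨SymmGen.refl _, SymmGen.symm, h.symmGen_trans⟩⟩

end IsTrivialPoset

variable [Fintype P]

theorem card_le_posetHeight {s : Finset P} (hs : IsChain (· ≤ ·) (s : Set P)) :
    #s ≤ posetHeight P :=
  le_csSup (bddAbove_setOf_card _) ⟨s, hs, rfl⟩

theorem exists_isChain_card_eq_posetHeight :
    ∃ s : Finset P, IsChain (· ≤ ·) (s : Set P) ∧ #s = posetHeight P :=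
  exists_card_eq_sSup _ (by simp)

theorem card_le_posetWidth {s : Finset P} (hs : IsAntichain (· ≤ ·) (s : Set P)) :
    #s ≤ posetWidth P :=
  le_csSup (bddAbove_setOf_card _) ⟨s, hs, rfl⟩

theorem exists_incomparable_of_two_le_posetWidth (hw : 2 ≤ posetWidth P) :
    ∃ u v : P, ¬ SymmGen (· ≤ ·) u v := by
  obtain ⟨s, hs, hcard⟩ :
      ∃ s : Finset P, IsAntichain (· ≤ ·) (s : Set P) ∧ #s = posetWidth P :=
    exists_card_eq_sSup _ (by simp)
  obtain ⟨u, hu, v, hv, huv⟩ := one_lt_card.1 (by omega : 1 < #s)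
  exact ⟨u, v, fun h => h.elim (hs hu hv huv) (hs hv hu (Ne.symm huv))⟩

theorem one_le_posetHeight_of_two_le_posetWidth (hw : 2 ≤ posetWidth P) :
    1 ≤ posetHeight P := by
  obtain ⟨u, -⟩ := exists_incomparable_of_two_le_posetWidth hw
  simpa using card_le_posetHeight (s := {u}) (by simp)

end Poset

section LowerBound

variable {P α : Type*} [PartialOrder P]

theorem IsTrivialPoset.exists_forall_not_symmGen (h : IsTrivialPoset P) {u v : P}
    (huv : ¬ SymmGen (· ≤ ·) u v) {s : Set P} (hs : IsChain (· ≤ ·) s) :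
    ∃ y, ∀ x ∈ s, ¬ SymmGen (· ≤ ·) x y := by
  by_contra! hcomp
  obtain ⟨x, hx, hxu⟩ := hcomp u
  obtain ⟨x', hx', hx'v⟩ := hcomp v
  exact huv (h.symmGen_trans (h.symmGen_trans hxu.symm (hs.total hx hx')) hx'v)

theorem exists_eq_empty_of_isChain (f : P ↪o Finset α) {s : Finset P}
    (hs : IsChain (· ≤ ·) (s : Set P)) (hne : s.Nonempty) (hlt : ∀ x ∈ s, #(f x) < #s) :
    ∃ x ∈ s, f x = ∅ := by
  by_contra! hf
  have hinj : Set.InjOn (fun x => #(f x)) s := by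
    intro x hx y hy hxy
    by_contra hxy'
    rcases hs hx hy hxy' with hle | hle
    · exact (card_strictMono (f.strictMono (hle.lt_of_ne hxy'))).ne hxy
    · exact (card_strictMono (f.strictMono (hle.lt_of_ne (Ne.symm hxy')))).ne' hxy
  have hmaps : Set.MapsTo (fun x => #(f x)) s (Icc 1 (#s - 1)) := fun x hx => by
    have hpos := card_pos.2 (hf x hx)
    have hx_lt := hlt x hx
    simp only [coe_Icc, Set.mem_Icc]
    omega
  have hcard := card_le_card_of_injOn _ hmaps hinj
  rw [Nat.card_Icc] at hcard
  have hs_pos := hne.card_pos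
  omega

theorem card_add_card_le_card_of_strictMono {ι : Type*} {f : Finset ι → Finset α}
    (hf : StrictMono f) (s : Finset ι) : #(f ∅) + #s ≤ #(f s) := by
  classical
  induction s using Finset.induction_on with
  | empty => simp
  | insert a s ha ih =>
    have hstep := card_lt_card (hf (ssubset_insert ha))
    rw [card_insert_of_notMem ha]
    omega

variable [Fintype P] [Fintype α]

theorem IsTrivialPoset.not_forall_card_lt_or_eq_univ (h : IsTrivialPoset P)
    (hw : 2 ≤ posetWidth P) (f : P ↪o Finset α) :
    ¬ ∀ x, #(f x) < posetHeight P ∨ f x = univ := by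
  intro hf
  obtain ⟨u, v, huv⟩ := exists_incomparable_of_two_le_posetWidth hw
  obtain ⟨s, hs, hcard⟩ := exists_isChain_card_eq_posetHeight (P := P)
  obtain ⟨y, hy⟩ := h.exists_forall_not_symmGen huv hs
  by_cases htop : ∃ x ∈ s, f x = univ
  · obtain ⟨x, hx, hfx⟩ := htop
    exact hy x hx (.inr (f.le_iff_le.1 (hfx ▸ subset_univ _)))
  · push Not at htop
    have hne : s.Nonempty := card_pos.1 (hcard ▸ one_le_posetHeight_of_two_le_posetWidth hw)
    obtain ⟨x, hx, hfx⟩ := exists_eq_empty_of_isChain f hs hne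
      fun x hx => hcard ▸ (hf x).resolve_right (htop x hx)
    exact hy x hx (.inl (f.le_iff_le.1 (hfx ▸ empty_subset _)))

theorem IsTrivialPoset.not_arrows_of_le (h : IsTrivialPoset P) (hw : 2 ≤ posetWidth P)
    {n N : ℕ} (hN : N ≤ n + posetHeight P) : ¬ Arrows P (Finset (Fin n)) (Finset (Fin N)) := by
  intro harrows
  rcases harrows fun X => decide (#X < posetHeight P ∨ X = univ) with ⟨f, hf⟩ | ⟨f, hf⟩
  · exact h.not_forall_card_lt_or_eq_univ hw f (by simpa using hf)
  · simp only [decide_eq_false_iff_not, not_or, not_lt] at hf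
    have hgrow := card_add_card_le_card_of_strictMono f.strictMono univ
    have htop : #(f univ) < N := by simpa using (card_lt_iff_ne_univ _).2 (hf univ).2
    have hbot := (hf ∅).1
    rw [card_univ, Fintype.card_fin] at hgrow
    omega

end LowerBound

section UpperBound

variable {P Q A : Type*}

theorem exists_monotone_blue_chain_or_red_section [Preorder Q] {m : ℕ}
    (c : Q × Fin (m + 1) → Bool) :
    (∃ g : Fin (m + 1) → Q, Monotone g ∧ ∀ j, c (g j, j) = true) ∨
    (∃ s : Q → Fin (m + 1), Monotone s ∧ ∀ X, c (X, s X) = false) := by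
  classical
  let chain (ℓ : ℕ) (X : Q) : Prop := ∃ g : Fin (m + 1) → Q,
    Monotone g ∧ (∀ j, g j ≤ X) ∧ ∀ j : Fin (m + 1), (j : ℕ) < ℓ → c (g j, j) = true
  have chain_zero (X : Q) : chain 0 X := ⟨fun _ => X, monotone_const, fun _ => le_rfl, by simp⟩
  have chain_mono {ℓ : ℕ} {X Y : Q} (hXY : X ≤ Y) : chain ℓ X → chain ℓ Y :=
    fun ⟨g, hg, hgX, hgc⟩ => ⟨g, hg, fun j => (hgX j).trans hXY, hgc⟩
  have chain_succ {X : Q} {j : Fin (m + 1)} (hX : c (X, j) = true) :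
      chain j X → chain (j + 1) X := by
    rintro ⟨g, hg, hgX, hgc⟩
    refine ⟨fun i => if i < j then g i else X, fun i i' hii' => ?_, fun i => ?_, fun i hi => ?_⟩
    · by_cases hi : i < j <;> by_cases hi' : i' < j <;> simp only [hi, hi', if_true, if_false]
      exacts [hg hii', hgX i, absurd (hii'.trans_lt hi') hi, le_rfl]
    · dsimp only; split_ifs; exacts [hgX i, le_rfl]
    · dsimp only; split_ifs with hij
      · exact hgc i hij
      · rwa [show i = j by omega]
  by_cases hfull : ∃ X, chain (m + 1) X
  · obtain ⟨X, g, hg, -, hgc⟩ := hfull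
    exact .inl ⟨g, hg, fun j => hgc j j.isLt⟩
  · push Not at hfull
    -- `s X` is the length of the longest blue chain below `X`, so `(X, s X)` cannot be blue.
    let s (X : Q) : ℕ := Nat.findGreatest (chain · X) m
    have hs_chain (X : Q) : chain (s X) X :=
      Nat.findGreatest_spec (P := (chain · X)) (Nat.zero_le m) (chain_zero X)
    refine .inr ⟨fun X => ⟨s X, Nat.lt_succ_of_le (Nat.findGreatest_le m)⟩,
      fun X Y hXY => Fin.mk_le_mk.2 (Nat.findGreatest_mono (fun _ => chain_mono hXY) le_rfl),
      fun X => ?_⟩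
    by_contra hblue
    have hnext := chain_succ (Bool.not_eq_false _ ▸ hblue) (hs_chain X)
    rcases (Nat.findGreatest_le (P := (chain · X)) m).lt_or_eq with hlt | heq
    · exact (Nat.le_findGreatest hlt hnext).not_gt (Nat.lt_succ_self _)
    · exact hfull X (heq ▸ hnext)

theorem arrows_prod_of_strictMono [PartialOrder P] [PartialOrder Q] [PartialOrder A] {m : ℕ}
    {r : P → Fin (m + 1)} (hr : StrictMono r) {D : P → A}
    (hD : ∀ a b, D a ≤ D b ↔ SymmGen (· ≤ ·) a b) :
    Arrows P Q ((Q × Fin (m + 1)) × A) := by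
  intro c
  by_cases hred : ∃ d, ∃ s : Q → Fin (m + 1), Monotone s ∧ ∀ X, c ((X, s X), d) = false
  · obtain ⟨d, s, hs, hsc⟩ := hred
    refine .inr ⟨.ofMapLEIff (fun X => ((X, s X), d)) fun X Y => ?_, hsc⟩
    simp only [Prod.mk_le_mk, le_rfl, and_true]
    exact ⟨And.left, fun hXY => ⟨hXY, hs hXY⟩⟩
  · push Not at hred
    choose g hg hgc using fun d =>
      (exists_monotone_blue_chain_or_red_section (c ⟨·, d⟩)).resolve_right fun ⟨s, hs, hsc⟩ =>
        (hred d s hs).elim fun X hX => hX (hsc X)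
    refine .inl ⟨.ofMapLEIff (fun p => ((g (D p) (r p), r p), D p)) fun a b => ?_,
      fun p => hgc _ _⟩
    simp only [Prod.mk_le_mk]
    constructor
    · rintro ⟨⟨-, hrab⟩, hDab⟩
      exact ((hD a b).1 hDab).elim id fun hba =>
        (hba.eq_or_lt.resolve_right fun hlt => (hr hlt).not_ge hrab).ge
    · intro hab
      have hDeq : D a = D b := ((hD a b).2 (.inl hab)).antisymm ((hD b a).2 (.inr hab))
      exact ⟨⟨hDeq ▸ hg (D a) (hr.monotone hab), hr.monotone hab⟩, hDeq.le⟩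

variable [PartialOrder P] [Fintype P]

theorem IsTrivialPoset.exists_strictMono_fin (h : IsTrivialPoset P) {m : ℕ}
    (hm : posetHeight P ≤ m + 1) : ∃ r : P → Fin (m + 1), StrictMono r := by
  classical
  have hlt (p : P) : #{q | q < p} < m + 1 := by
    have hchain := card_le_posetHeight (s := insert p ({q | q < p} : Finset P))
      fun x hx y hy _ => by
        simp only [coe_insert, coe_filter, Set.mem_insert_iff, Set.mem_ofPred_eq, mem_univ,
          true_and] at hx hy
        exact h.symmGen_of_le_of_le (hx.elim le_of_eq le_of_lt) (hy.elim le_of_eq le_of_lt)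
    rw [card_insert_of_notMem (by simp)] at hchain
    omega
  refine ⟨fun p => ⟨_, hlt p⟩, fun a b hab => Fin.mk_lt_mk.2 (card_lt_card ?_)⟩
  refine (ssubset_iff_of_subset fun q hq => ?_).2 ⟨a, by simpa using hab, by simp⟩
  simp only [mem_filter, mem_univ, true_and] at hq ⊢
  exact hq.trans hab

theorem IsTrivialPoset.exists_middle_layer_labelling (h : IsTrivialPoset P) {c : ℕ}
    (hw : posetWidth P ≤ c.choose (c / 2)) :
    ∃ D : P → Finset (Fin c), ∀ a b, D a ≤ D b ↔ SymmGen (· ≤ ·) a b := by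
  classical
  let S := h.compSetoid
  let reps : Finset P := univ.image (Quotient.out : Quotient S → P)
  have hanti : IsAntichain (· ≤ ·) (reps : Set P) := by
    simp only [reps, coe_image, coe_univ, Set.image_univ]
    rintro _ ⟨θ, rfl⟩ _ ⟨θ', rfl⟩ hne hle
    exact hne (congrArg _ (Quotient.out_equiv_out.1 (.inl hle)))
  have hcard :
      Fintype.card (Quotient S) ≤ Fintype.card (powersetCard (c / 2) (univ : Finset (Fin c))) :=
    calc Fintype.card (Quotient S) = #reps :=
          (card_image_of_injective _ Quotient.out_injective).symm
      _ ≤ c.choose (c / 2) := (card_le_posetWidth hanti).trans hw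
      _ = _ := by simp
  obtain ⟨e⟩ := Function.Embedding.nonempty_of_card_le hcard
  have he_card (θ : Quotient S) : #(e θ : Finset (Fin c)) = c / 2 :=
    (mem_powersetCard.1 (e θ).2).2
  refine ⟨fun p => e (Quotient.mk S p), fun a b => ⟨fun hab => ?_, fun hab => ?_⟩⟩
  · exact Quotient.exact <| e.injective <| Subtype.ext <|
      eq_of_subset_of_card_le hab (by rw [he_card, he_card])
  · change (e ⟦a⟧ : Finset (Fin c)) ⊆ e ⟦b⟧
    rw [Quotient.sound (s := S) hab]

def initialSegments (m : ℕ) : Fin (m + 1) ↪o Finset (Fin m) :=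
  .ofStrictMono (fun j => ({i | (i : ℕ) < j} : Finset (Fin m))) fun j j' hjj' => by
    rw [Fin.lt_def] at hjj'
    refine (ssubset_iff_of_subset fun i hi => ?_).2 ⟨⟨j, by omega⟩, ?_, ?_⟩
    · simp only [mem_filter, mem_univ, true_and] at hi ⊢
      omega
    · simpa using hjj'
    · simp

def OrderEmbedding.prodMap {α β γ δ : Type*} [LE α] [LE β] [LE γ] [LE δ]
    (f : α ↪o β) (g : γ ↪o δ) : α × γ ↪o β × δ :=
  ⟨f.toEmbedding.prodMap g.toEmbedding, by simp [Prod.le_def, f.map_rel_iff, g.map_rel_iff]⟩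

/-- The three coordinates become the blocks `Fin n`, `Fin m`, `Fin c` of `Fin (n + m + c)`. -/
def cubeEncoding (n m c : ℕ) :
    (Finset (Fin n) × Fin (m + 1)) × Finset (Fin c) ↪o Finset (Fin (n + m + c)) :=
  (OrderEmbedding.prodMap (.prodMap (.refl _) (initialSegments m)) (.refl _)).trans <|
    ((OrderEmbedding.prodMap sumEquiv.symm.toOrderEmbedding (.refl _)).trans
      sumEquiv.symm.toOrderEmbedding).trans <|
    mapEmbedding ((finSumFinEquiv.sumCongr (Equiv.refl _)).trans finSumFinEquiv).toEmbedding

theorem IsTrivialPoset.arrows_cube (h : IsTrivialPoset P) {n m c : ℕ}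
    (hm : posetHeight P ≤ m + 1) (hc : posetWidth P ≤ c.choose (c / 2)) :
    Arrows P (Finset (Fin n)) (Finset (Fin (n + m + c))) := by
  obtain ⟨r, hr⟩ := h.exists_strictMono_fin hm
  obtain ⟨D, hD⟩ := h.exists_middle_layer_labelling hc
  exact (arrows_prod_of_strictMono hr hD).of_orderEmbedding (cubeEncoding n m c)

end UpperBound

theorem trivial_poset_vs_cube_ramsey_bounds_general (P : Type*) [PartialOrder P] [Fintype P]
    (htriv : IsTrivialPoset P) (hw : 2 ≤ posetWidth P) (n : ℕ) :
    n + posetHeight P + 1 ≤ posetRamsey P (Finset (Fin n)) ∧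
    (posetRamsey P (Finset (Fin n)) : ℝ) <
      n + posetHeight P + Real.logb 2 (posetWidth P) +
        (1 / 2) * Real.logb 2 (Real.logb 2 (posetWidth P)) + 1 := by
  obtain ⟨c, hc, hc_lt⟩ := exists_le_choose_half_lt_logb hw
  have hh := one_le_posetHeight_of_two_le_posetWidth hw
  have hup : n + (posetHeight P - 1) + c ∈ {N | Arrows P (Finset (Fin n)) (Finset (Fin N))} :=
    htriv.arrows_cube (by omega) hc
  have hle : posetRamsey P (Finset (Fin n)) ≤ n + (posetHeight P - 1) + c := by
    rw [posetRamsey_eq_sInf]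
    exact Nat.sInf_le hup
  have hge : n + posetHeight P + 1 ≤ posetRamsey P (Finset (Fin n)) := by
    rw [posetRamsey_eq_sInf]
    refine le_csInf ⟨_, hup⟩ fun N hN => ?_
    by_contra! hlt
    exact htriv.not_arrows_of_le hw (by omega) hN
  refine ⟨hge, ?_⟩
  have hle' : (posetRamsey P (Finset (Fin n)) : ℝ) ≤ (n + (posetHeight P - 1) + c : ℕ) := by
    exact_mod_cast hle
  push_cast [hh] at hle'
  linarith

/-- For a finite trivial poset `P` of width at least 2, and every `n ≥ 1`,
`n + h(P) + 1 ≤ R(P, Q_n) < n + h(P) + log₂ w(P) + ½ log₂ log₂ w(P) + 1`. -/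
theorem trivial_poset_vs_cube_ramsey_bounds (P : Type*) [PartialOrder P] [Fintype P]
    (htriv : IsTrivialPoset P) (hw : 2 ≤ posetWidth P) (n : ℕ) (hn : 1 ≤ n) :
    n + posetHeight P + 1 ≤ posetRamsey P (Finset (Fin n)) ∧
    (posetRamsey P (Finset (Fin n)) : ℝ) <
      n + posetHeight P + Real.logb 2 (posetWidth P) +
        (1 / 2) * Real.logb 2 (Real.logb 2 (posetWidth P)) + 1 :=
  trivial_poset_vs_cube_ramsey_bounds_general P htriv hw n
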